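/- If certified box (I×J,κ) with κ ≤ 1/2 is converted to the edge e_{I,J'} where J' is obtained from J by removing the initial ⌊κ·μ(I)⌋ and final ⌊κ·μ(I)⌋ elements (μ(I) = μ(J)), then 3κ·μ(I) ≥ d_edit(x_I, y_{J'}), i.e., the new edge is also certified. -/

import Mathlib

/-! Deleting one letter from the second argument raises the edit distance by at most one, so
passing from `y_J` to its subword `y_{J'}`, which is `y_J` with at most `2⌊κμ⌋` letters removed, costs at
most `2⌊κμ⌋ ≤ 2κμ` on top of the certified `κμ`. -/

open List

/-- Cost structure for Levenshtein distance (as in the removed Mathlib file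
`Mathlib/Data/List/EditDistance/Defs.lean`). -/
structure Levenshtein.Cost (α β δ : Type*) where
  delete : α → δ
  insert : β → δ
  substitute : α → β → δ

/-- Unit costs (as in the removed Mathlib definition). -/
def Levenshtein.defaultCost {α : Type*} [DecidableEq α] : Levenshtein.Cost α α ℕ where
  delete _ := 1
  insert _ := 1
  substitute a b := if a = b then 0 else 1

/-- Levenshtein distance, by the recursion that characterized the removed Mathlib definition. -/
def levenshtein {α β δ : Type*} [AddZeroClass δ] [Min δ] (C : Levenshtein.Cost α β δ) :
    List α → List β → δ
  | [], [] => 0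
  | [], y :: ys => C.insert y + levenshtein C [] ys
  | x :: xs, [] => C.delete x + levenshtein C xs []
  | x :: xs, y :: ys =>
    min (C.delete x + levenshtein C xs (y :: ys))
      (min (C.insert y + levenshtein C (x :: xs) ys) (C.substitute x y + levenshtein C xs ys))

/-- Edit distance between two lists (Levenshtein distance with unit costs). -/
def edist {α : Type*} [DecidableEq α] (x y : List α) : ℕ :=
  levenshtein Levenshtein.defaultCost x y

/-- The substring of `x` indexed by the interval `I = {I.1, ..., I.2}` minus its minimum,
i.e. the characters `x_{I.1+1}, ..., x_{I.2}` (1-indexed). -/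
def sub {α : Type*} (x : List α) (I : ℕ × ℕ) : List α :=
  (x.drop I.1).take (I.2 - I.1)

section EditDistance

variable {α : Type*} [DecidableEq α]

@[simp] lemma edist_nil_left (l : List α) : edist [] l = l.length := by
  induction l with
  | nil => simp [_root_.edist, levenshtein]
  | cons y ys ih =>
    simp only [_root_.edist, levenshtein, Levenshtein.defaultCost] at ih ⊢
    rw [ih, length_cons, Nat.add_comm]

lemma edist_cons_nil (x : α) (xs : List α) : edist (x :: xs) [] = 1 + edist xs [] := by
  simp only [_root_.edist, levenshtein, Levenshtein.defaultCost]

lemma edist_cons_cons (x y : α) (xs ys : List α) :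
    edist (x :: xs) (y :: ys) =
      min (1 + edist xs (y :: ys))
        (min (1 + edist (x :: xs) ys) ((if x = y then 0 else 1) + edist xs ys)) := by
  simp only [_root_.edist, levenshtein, Levenshtein.defaultCost]

lemma edist_cons_left_le (x : α) (xs ys : List α) :
    edist (x :: xs) ys ≤ 1 + edist xs ys := by
  cases ys with
  | nil => exact (edist_cons_nil x xs).le
  | cons y ys => exact (edist_cons_cons x y xs ys).trans_le (min_le_left _ _)

lemma edist_le_edist_cons_right (a : List α) (y : α) (ys : List α) :
    edist a ys ≤ edist a (y :: ys) + 1 := by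
  induction a with
  | nil => simp only [edist_nil_left, length_cons]; omega
  | cons x xs ih =>
    have hdel := edist_cons_left_le x xs ys
    rw [edist_cons_cons]
    split_ifs <;> omega

/-- A bound on deleting letters from the right argument survives prepending a common letter,
since each branch of the recursion for `z :: b` is dominated by the same branch for `z :: c`. -/
lemma edist_cons_right_le_of_le {b c : List α} {k : ℕ}
    (h : ∀ a, edist a b ≤ edist a c + k) (z : α) (a : List α) :
    edist a (z :: b) ≤ edist a (z :: c) + k := by
  induction a with
  | nil =>
    have := h []
    simp only [edist_nil_left, length_cons] at this ⊢
    omega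
  | cons x xs ih =>
    have hins := h (x :: xs)
    have hsubst := h xs
    rw [edist_cons_cons, edist_cons_cons]
    omega

lemma List.Sublist.edist_le {b c : List α} (hbc : b <+ c) (a : List α) :
    edist a b ≤ edist a c + (c.length - b.length) := by
  induction hbc generalizing a with
  | slnil => simp
  | @cons b c y hbc ih =>
    have := hbc.length_le
    have := edist_le_edist_cons_right a y c
    have := ih a
    simp only [length_cons]
    omega
  | @cons_cons b c z hbc ih =>
    simpa using edist_cons_right_le_of_le ih z a

lemma edist_take_drop_le (a c : List α) {ℓ m : ℕ} (hm : c.length ≤ m + 2 * ℓ) :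
    edist a ((c.drop ℓ).take m) ≤ edist a c + 2 * ℓ := by
  have hsub : (c.drop ℓ).take m <+ c := (take_sublist _ _).trans (drop_sublist _ _)
  have hlen : c.length - ((c.drop ℓ).take m).length ≤ 2 * ℓ := by
    simp only [length_take, length_drop]
    omega
  exact (hsub.edist_le a).trans (by omega)

end EditDistance

lemma sub_shrink {α : Type*} (y : List α) (J : ℕ × ℕ) (ℓ : ℕ) :
    sub y (J.1 + ℓ, J.2 - ℓ) = ((sub y J).drop ℓ).take (J.2 - J.1 - 2 * ℓ) := by
  simp only [sub, drop_take, drop_drop, take_take]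
  congr 1
  omega

lemma length_sub_le {α : Type*} (y : List α) (J : ℕ × ℕ) : (sub y J).length ≤ J.2 - J.1 := by
  simp [sub]

theorem stmt15_general {α : Type*} [DecidableEq α] (x y : List α) (I J : ℕ × ℕ) (κ : ℚ)
    (hcert : (edist (sub x I) (sub y J) : ℚ) ≤ κ * ((I.2 : ℚ) - (I.1 : ℚ))) :
    (edist (sub x I) (sub y (J.1 + ⌊κ * ((I.2 : ℚ) - (I.1 : ℚ))⌋₊,
        J.2 - ⌊κ * ((I.2 : ℚ) - (I.1 : ℚ))⌋₊)) : ℚ) ≤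
      3 * κ * ((I.2 : ℚ) - (I.1 : ℚ)) := by
  set r := κ * ((I.2 : ℚ) - (I.1 : ℚ))
  have hshrink : edist (sub x I) (sub y (J.1 + ⌊r⌋₊, J.2 - ⌊r⌋₊)) ≤
      edist (sub x I) (sub y J) + 2 * ⌊r⌋₊ := by
    rw [sub_shrink]
    exact edist_take_drop_le _ _ (by have := length_sub_le y J; omega)
  have hfloor : (⌊r⌋₊ : ℚ) ≤ r := Nat.floor_le ((Nat.cast_nonneg _).trans hcert)
  calc (edist (sub x I) (sub y (J.1 + ⌊r⌋₊, J.2 - ⌊r⌋₊)) : ℚ)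
      ≤ edist (sub x I) (sub y J) + 2 * ⌊r⌋₊ := by exact_mod_cast hshrink
    _ ≤ r + 2 * r := by gcongr
    _ = 3 * κ * ((I.2 : ℚ) - (I.1 : ℚ)) := by ring

/-- shrinking the vertical interval of a certified box (I×J, κ), κ ≤ 1/2,
by ℓ = ⌊κ·μ(I)⌋ at both ends and tripling the bound yields a certified edge:
d_edit(x_I, y_{J'}) ≤ 3κ·μ(I). -/
theorem stmt15 {α : Type*} [DecidableEq α] (x y : List α) (I J : ℕ × ℕ) (κ : ℚ)
    (hI : I.1 < I.2) (hJ : J.1 ≤ J.2) (hμ : I.2 - I.1 = J.2 - J.1)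
    (hκ : κ ≤ 1 / 2)
    (hcert : (edist (sub x I) (sub y J) : ℚ) ≤ κ * ((I.2 : ℚ) - (I.1 : ℚ))) :
    (edist (sub x I) (sub y (J.1 + ⌊κ * ((I.2 : ℚ) - (I.1 : ℚ))⌋₊,
        J.2 - ⌊κ * ((I.2 : ℚ) - (I.1 : ℚ))⌋₊)) : ℚ) ≤
      3 * κ * ((I.2 : ℚ) - (I.1 : ℚ)) :=
  stmt15_general x y I J κ hcert
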